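/- For all integers i, j with 2 ≤ i < j ≤ n+1, one has (M ∘ Γ ∘ N)(e_{i,j}) = x · e_{i−1,j−1}. -/
import Mathlib

open Finset

/-- `compSeq σ a L = σ (a + L - 1) ∘ ⋯ ∘ σ (a + 1) ∘ σ a` (the identity if `L = 0`).
In particular `compSeq σ 1 n = σ n ∘ ⋯ ∘ σ 1`. -/
def compSeq {R : Type*} [CommSemiring R] {V : Type*} [AddCommMonoid V] [Module R V]
    (σ : ℕ → Module.End R V) (a : ℕ) : ℕ → Module.End R V
  | 0 => 1
  | L + 1 => σ (a + L) * compSeq σ a L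

section LKBAux

variable {R : Type*} [CommRing R] {V : Type*} [AddCommGroup V] [Module R V]

lemma LKB.compSeq_split (σ : ℕ → Module.End R V) (a L1 L2 : ℕ) :
    compSeq σ a (L1 + L2) = compSeq σ (a + L1) L2 * compSeq σ a L1 := by
  induction L2 with
  | zero => simp [compSeq]
  | succ m ih =>
      show σ (a + (L1 + m)) * compSeq σ a (L1 + m) = _
      rw [ih]
      show _ = (σ (a + L1 + m) * compSeq σ (a + L1) m) * compSeq σ a L1
      rw [mul_assoc, Nat.add_assoc]

lemma LKB.compSeq_fix (σ : ℕ → Module.End R V) (a L : ℕ) (v : V)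
    (h : ∀ t, a ≤ t → t < a + L → σ t v = v) : compSeq σ a L v = v := by
  induction L with
  | zero => rfl
  | succ m ih =>
      show (σ (a + m) * compSeq σ a m) v = v
      rw [Module.End.mul_apply, ih (fun t h1 h2 => h t h1 (by omega)),
        h (a + m) (by omega) (by omega)]

lemma LKB.icc_insert_left (a b : ℕ) (h : a ≤ b) :
    Icc a b = insert a (Icc (a + 1) b) := by
  ext t; simp only [mem_Icc, mem_insert]; omega

lemma LKB.icc_insert_right (a b : ℕ) (h : a ≤ b + 1) :
    Icc a (b + 1) = insert (b + 1) (Icc a b) := by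
  ext t; simp only [mem_Icc, mem_insert]; omega

lemma LKB.sum_smul_sub_const (t : Finset ℕ) (c : ℕ → R) (v : ℕ → V) (d : R) (G : V) :
    ∑ s ∈ t, c s • (v s - d • G)
      = (∑ s ∈ t, c s • v s) - ((∑ s ∈ t, c s) * d) • G := by
  simp only [smul_sub, smul_smul, Finset.sum_sub_distrib, Finset.sum_mul, Finset.sum_smul]

lemma LKB.zshift (x : Rˣ) (m : ℤ) :
    ((x ^ (m + 1) : Rˣ) : R) = ((x ^ m : Rˣ) : R) * (x : R) := by
  rw [zpow_add_one, Units.val_mul]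

lemma LKB.zsplit (x : Rˣ) (a b : ℤ) (h : a = b + 1) :
    ((x ^ a : Rˣ) : R) = ((x ^ b : Rˣ) : R) * (x : R) := by
  subst h; exact LKB.zshift x b

/-- telescoping sum -/
lemma LKB.sum_tele (f : ℕ → R) (a b : ℕ) (h : a ≤ b) :
    ∑ s ∈ Icc (a + 1) b, (f s - f (s - 1)) = f b - f a := by
  induction b with
  | zero => interval_cases a; simp
  | succ m ih =>
      rcases Nat.eq_or_lt_of_le h with h' | h'
      · rw [← h']; simp
      · have ha : a ≤ m := by omega
        rw [LKB.icc_insert_right (a + 1) m (by omega),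
          Finset.sum_insert (by simp), ih ha]
        simp only [Nat.add_sub_cancel]
        ring

end LKBAux

section LKB

variable {R : Type*} [CommRing R] (x : Rˣ) (y : R)
  {V : Type*} [AddCommGroup V] [Module R V]
  (n : ℕ) (e : ℕ → ℕ → V) (σ : ℕ → Module.End R V)

/-- the hypothesis on the LKB generators -/
def LKB.HS : Prop := ∀ k i j, 1 ≤ k → k ≤ n → 1 ≤ i → i < j → j ≤ n + 1 →
      σ k (e i j) =
        if i = k + 1 then (x : R) • e k j + (1 - (x : R)) • e i j
        else if k = i ∧ i + 1 < j then
          e (i + 1) j - ((x : R) * y * ((x : R) - 1)) • e k (k + 1)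
        else if k = i ∧ j = i + 1 then -(((x : R) ^ 2 * y) • e k (k + 1))
        else if i < k ∧ k + 1 < j then e i j - (y * ((x : R) - 1) ^ 2) • e k (k + 1)
        else if i < k ∧ k + 1 = j then
          e i (j - 1) - ((x : R) * y * ((x : R) - 1)) • e k (k + 1)
        else if k = j then (x : R) • e i (j + 1) + (1 - (x : R)) • e i j
        else e i j

variable {x y n e σ}

namespace LKB

variable (hσ : HS x y n e σ)
include hσ

lemma sA (k a b : ℕ) (hk1 : 1 ≤ k) (hk2 : k ≤ n) (hab : a < b) (hb : b ≤ n + 1)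
    (h : a = k + 1) :
    σ k (e a b) = (x : R) • e k b + (1 - (x : R)) • e a b := by
  rw [hσ k a b hk1 hk2 (by omega) hab hb, if_pos h]

lemma sB (k a b : ℕ) (hk1 : 1 ≤ k) (hk2 : k ≤ n) (ha : 1 ≤ a) (hb : b ≤ n + 1)
    (h1 : k = a) (h2 : a + 1 < b) :
    σ k (e a b) = e (a + 1) b - ((x : R) * y * ((x : R) - 1)) • e k (k + 1) := by
  rw [hσ k a b hk1 hk2 ha (by omega) hb, if_neg (by omega), if_pos ⟨h1, h2⟩]

lemma sC (k a b : ℕ) (hk1 : 1 ≤ k) (hk2 : k ≤ n) (ha : 1 ≤ a) (hb : b ≤ n + 1)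
    (h1 : k = a) (h2 : b = a + 1) :
    σ k (e a b) = -((((x : R)) ^ 2 * y) • e k (k + 1)) := by
  rw [hσ k a b hk1 hk2 ha (by omega) hb, if_neg (by omega), if_neg (by omega),
    if_pos ⟨h1, h2⟩]

lemma sD (k a b : ℕ) (hk1 : 1 ≤ k) (hk2 : k ≤ n) (ha : 1 ≤ a) (hb : b ≤ n + 1)
    (h1 : a < k) (h2 : k + 1 < b) :
    σ k (e a b) = e a b - (y * ((x : R) - 1) ^ 2) • e k (k + 1) := by
  rw [hσ k a b hk1 hk2 ha (by omega) hb, if_neg (by omega), if_neg (by omega),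
    if_neg (by omega), if_pos ⟨h1, h2⟩]

lemma sE (k a b : ℕ) (hk1 : 1 ≤ k) (hk2 : k ≤ n) (ha : 1 ≤ a) (hb : b ≤ n + 1)
    (h1 : a < k) (h2 : k + 1 = b) :
    σ k (e a b) = e a (b - 1) - ((x : R) * y * ((x : R) - 1)) • e k (k + 1) := by
  rw [hσ k a b hk1 hk2 ha (by omega) hb, if_neg (by omega), if_neg (by omega),
    if_neg (by omega), if_neg (by omega), if_pos ⟨h1, h2⟩]

lemma sId (k a b : ℕ) (hk1 : 1 ≤ k) (hk2 : k ≤ n) (ha : 1 ≤ a) (hab : a < b)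
    (hb : b ≤ n + 1) (h1 : a ≠ k + 1) (h2 : k ≠ a) (h3 : ¬(a < k ∧ k + 1 ≤ b))
    (h4 : k ≠ b) :
    σ k (e a b) = e a b := by
  rw [hσ k a b hk1 hk2 ha hab hb, if_neg (by omega), if_neg (by omega),
    if_neg (by omega), if_neg (by omega), if_neg (by omega), if_neg (by omega)]

end LKB

end LKB

section LKBW

variable {R : Type*} [CommRing R] {V : Type*} [AddCommGroup V] [Module R V]

/-- the invariant vector during the middle phase -/
def LKB.wMid (x : Rˣ) (e : ℕ → ℕ → V) (p q L : ℕ) : V :=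
  (x : R) • e p (q + 1) + (1 - (x : R)) • e (L + 1) (q + 1)
  + ∑ s ∈ Icc (p + 1) L, (((x ^ ((s : ℤ) - (q : ℤ) + 1) : Rˣ) : R) * (1 - (x : R))) • e p s
  + ∑ s ∈ Icc (L + 2) q, (((x ^ ((s : ℤ) - (q : ℤ)) : Rˣ) : R) * (1 - (x : R))) • e p s
  + ∑ s ∈ Icc (L + 2) q,
      (((x ^ ((s : ℤ) - (q : ℤ) - 1) : Rˣ) : R) * (1 - (x : R)) ^ 2) • e (L + 1) s

/-- the final vector -/
def LKB.wFin (x : Rˣ) (e : ℕ → ℕ → V) (p q : ℕ) : V :=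
  (x : R) • e p q
  + ∑ s ∈ Icc (p + 1) (q - 1), (((x ^ ((s : ℤ) - (q : ℤ) + 1) : Rˣ) : R) * (1 - (x : R))) • e p s

variable {x : Rˣ} {y : R} {n : ℕ} {e : ℕ → ℕ → V} {σ : ℕ → Module.End R V}

namespace LKB

variable (hσ : HS x y n e σ)
include hσ

lemma stepA (p q : ℕ) (hp : 1 ≤ p) (hpq : p < q) (hq : q ≤ n) :
    σ p (e (p + 1) (q + 1) - ∑ s ∈ Icc (p + 1 + 1) q,
        (((x ^ ((s : ℤ) - ((q : ℤ) + 1)) : Rˣ) : R) * ((x : R) - 1)) • e (p + 1) s)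
      = wMid x e p q p := by
  rw [map_sub, map_sum]
  rw [sA hσ p (p+1) (q+1) (by omega) (by omega) (by omega) (by omega) rfl]
  have H : ∑ s ∈ Icc (p + 1 + 1) q,
      (σ p) ((((x ^ ((s : ℤ) - ((q : ℤ) + 1)) : Rˣ) : R) * ((x : R) - 1)) • e (p + 1) s)
      = ∑ s ∈ Icc (p + 2) q,
          (-((((x ^ ((s : ℤ) - (q : ℤ)) : Rˣ) : R) * (1 - (x : R))) • e p s)
           + -((((x ^ ((s : ℤ) - (q : ℤ) - 1) : Rˣ) : R) * (1 - (x : R)) ^ 2) • e (p + 1) s)) := by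
    refine Finset.sum_congr rfl fun s hs => ?_
    have hs' := Finset.mem_Icc.mp hs
    rw [map_smul, sA hσ p (p+1) s (by omega) (by omega) (by omega) (by omega) rfl]
    have h1 : ((x ^ ((s : ℤ) - (q : ℤ)) : Rˣ) : R)
        = ((x ^ ((s : ℤ) - ((q : ℤ) + 1)) : Rˣ) : R) * (x : R) := by
      rw [show ((s : ℤ) - (q : ℤ)) = ((s : ℤ) - ((q : ℤ) + 1)) + 1 by omega, zshift]
    have h2 : ((x ^ ((s : ℤ) - (q : ℤ) - 1) : Rˣ) : R)
        = ((x ^ ((s : ℤ) - ((q : ℤ) + 1)) : Rˣ) : R) := by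
      rw [show ((s : ℤ) - (q : ℤ) - 1) = ((s : ℤ) - ((q : ℤ) + 1)) by omega]
    rw [h1, h2]
    module
  rw [H]
  rw [wMid, Finset.Icc_eq_empty (a := p + 1) (b := p) (by omega), Finset.sum_empty,
    Finset.sum_add_distrib, Finset.sum_neg_distrib, Finset.sum_neg_distrib]
  module

end LKB

end LKBW

section LKBSteps

variable {R : Type*} [CommRing R] {V : Type*} [AddCommGroup V] [Module R V]
variable {x : Rˣ} {y : R} {n : ℕ} {e : ℕ → ℕ → V} {σ : ℕ → Module.End R V}

namespace LKB

variable (hσ : HS x y n e σ)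
include hσ

lemma stepB (p q L : ℕ) (hp : 1 ≤ p) (hL : p ≤ L) (hLq : L + 2 ≤ q) (hq : q ≤ n) :
    σ (L + 1) (wMid x e p q L) = wMid x e p q (L + 1) := by
  have hbig : (L + 1) + 2 = L + 3 := rfl
  rw [wMid, wMid, hbig]
  -- split the two `Icc (L+2) q` sums on the left, and the `Icc (p+1) (L+1)` sum on the right
  rw [icc_insert_left (L + 2) q (by omega), Finset.sum_insert (by simp),
    Finset.sum_insert (by simp),
    icc_insert_right (p + 1) L (by omega), Finset.sum_insert (by simp)]
  rw [show L + 2 + 1 = L + 3 from rfl]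
  simp only [map_add, map_sum, map_smul]
  rw [sD hσ (L+1) p (q+1) (by omega) (by omega) (by omega) (by omega) (by omega) (by omega),
    sB hσ (L+1) (L+1) (q+1) (by omega) (by omega) (by omega) (by omega) rfl (by omega),
    sE hσ (L+1) p (L+2) (by omega) (by omega) (by omega) (by omega) (by omega) rfl,
    sC hσ (L+1) (L+1) (L+2) (by omega) (by omega) (by omega) (by omega) rfl rfl]
  have H3 : ∑ s ∈ Icc (p + 1) L,
      (((x ^ ((s : ℤ) - (q : ℤ) + 1) : Rˣ) : R) * (1 - (x : R))) • (σ (L+1)) (e p s)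
      = ∑ s ∈ Icc (p + 1) L,
          (((x ^ ((s : ℤ) - (q : ℤ) + 1) : Rˣ) : R) * (1 - (x : R))) • e p s := by
    refine Finset.sum_congr rfl fun s hs => ?_
    have hs' := Finset.mem_Icc.mp hs
    rw [sId hσ (L+1) p s (by omega) (by omega) (by omega) (by omega) (by omega)
      (by omega) (by omega) (by omega) (by omega)]
  have H5 : ∑ s ∈ Icc (L + 3) q,
      (((x ^ ((s : ℤ) - (q : ℤ)) : Rˣ) : R) * (1 - (x : R))) • (σ (L+1)) (e p s)
      = (∑ s ∈ Icc (L + 3) q, (((x ^ ((s : ℤ) - (q : ℤ)) : Rˣ) : R) * (1 - (x : R))) • e p s)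
        - ((∑ s ∈ Icc (L + 3) q, (((x ^ ((s : ℤ) - (q : ℤ)) : Rˣ) : R) * (1 - (x : R))))
            * (y * ((x : R) - 1) ^ 2)) • e (L + 1) (L + 1 + 1) := by
    rw [← sum_smul_sub_const]
    refine Finset.sum_congr rfl fun s hs => ?_
    have hs' := Finset.mem_Icc.mp hs
    rw [sD hσ (L+1) p s (by omega) (by omega) (by omega) (by omega) (by omega) (by omega)]
  have H7 : ∑ s ∈ Icc (L + 3) q,
      (((x ^ ((s : ℤ) - (q : ℤ) - 1) : Rˣ) : R) * (1 - (x : R)) ^ 2) • (σ (L+1)) (e (L + 1) s)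
      = (∑ s ∈ Icc (L + 3) q,
          (((x ^ ((s : ℤ) - (q : ℤ) - 1) : Rˣ) : R) * (1 - (x : R)) ^ 2) • e (L + 1 + 1) s)
        - ((∑ s ∈ Icc (L + 3) q, (((x ^ ((s : ℤ) - (q : ℤ) - 1) : Rˣ) : R) * (1 - (x : R)) ^ 2))
            * ((x : R) * y * ((x : R) - 1))) • e (L + 1) (L + 1 + 1) := by
    rw [← sum_smul_sub_const]
    refine Finset.sum_congr rfl fun s hs => ?_
    have hs' := Finset.mem_Icc.mp hs
    rw [sB hσ (L+1) (L+1) s (by omega) (by omega) (by omega) (by omega) rfl (by omega)]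
  rw [H3, H5, H7]
  -- now pure algebra; relate the two scalar sums
  have hsums : (∑ s ∈ Icc (L + 3) q, (((x ^ ((s : ℤ) - (q : ℤ) - 1) : Rˣ) : R) * (1 - (x : R)) ^ 2))
        * ((x : R) * y * ((x : R) - 1))
      = -((∑ s ∈ Icc (L + 3) q, (((x ^ ((s : ℤ) - (q : ℤ)) : Rˣ) : R) * (1 - (x : R))))
        * (y * ((x : R) - 1) ^ 2)) := by
    rw [Finset.sum_mul, Finset.sum_mul, ← Finset.sum_neg_distrib]
    refine Finset.sum_congr rfl fun s hs => ?_
    rw [zsplit x ((s : ℤ) - (q : ℤ)) ((s : ℤ) - (q : ℤ) - 1) (by omega)]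
    ring
  rw [hsums]
  -- normalize the exceptional zpow coefficients
  have c1 : ((x ^ (((L + 2 : ℕ) : ℤ) - (q : ℤ)) : Rˣ) : R)
      = ((x ^ (((L + 1 : ℕ) : ℤ) - (q : ℤ)) : Rˣ) : R) * (x : R) := by
    rw [show (((L + 2 : ℕ) : ℤ) - (q : ℤ)) = (((L + 1 : ℕ) : ℤ) - (q : ℤ)) + 1 by omega, zshift]
  have c2 : ((x ^ (((L + 2 : ℕ) : ℤ) - (q : ℤ) - 1) : Rˣ) : R)
      = ((x ^ (((L + 1 : ℕ) : ℤ) - (q : ℤ)) : Rˣ) : R) := by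
    rw [show (((L + 2 : ℕ) : ℤ) - (q : ℤ) - 1) = (((L + 1 : ℕ) : ℤ) - (q : ℤ)) by omega]
  have c3 : ((x ^ (((L + 1 : ℕ) : ℤ) - (q : ℤ) + 1) : Rˣ) : R)
      = ((x ^ (((L + 1 : ℕ) : ℤ) - (q : ℤ)) : Rˣ) : R) * (x : R) := by
    rw [zshift]
  rw [c1, c2, c3]
  rw [show (L + 2) - 1 = L + 1 from rfl]
  module

end LKB

end LKBSteps

section LKBSteps2

variable {R : Type*} [CommRing R] {V : Type*} [AddCommGroup V] [Module R V]
variable {x : Rˣ} {y : R} {n : ℕ} {e : ℕ → ℕ → V} {σ : ℕ → Module.End R V}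

namespace LKB

variable (hσ : HS x y n e σ)
include hσ

lemma stepC (p q L : ℕ) (hp : 1 ≤ p) (hpq : p < q) (hq : q ≤ n) (hL : L + 1 = q) :
    σ q (wMid x e p q L) = wFin x e p q := by
  subst hL
  rw [wMid, wFin, Finset.Icc_eq_empty (a := L + 2) (b := L + 1) (by omega),
    Finset.sum_empty, Finset.sum_empty]
  rw [show (L + 1) - 1 = L from rfl]
  simp only [map_add, map_sum, map_smul, add_zero]
  rw [sE hσ (L+1) p (L+2) (by omega) (by omega) (by omega) (by omega) (by omega) rfl,
    sC hσ (L+1) (L+1) (L+2) (by omega) (by omega) (by omega) (by omega) rfl rfl]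
  have H3 : ∑ s ∈ Icc (p + 1) L,
      (((x ^ ((s : ℤ) - ((L + 1 : ℕ) : ℤ) + 1) : Rˣ) : R) * (1 - (x : R))) • (σ (L+1)) (e p s)
      = ∑ s ∈ Icc (p + 1) L,
          (((x ^ ((s : ℤ) - ((L + 1 : ℕ) : ℤ) + 1) : Rˣ) : R) * (1 - (x : R))) • e p s := by
    refine Finset.sum_congr rfl fun s hs => ?_
    have hs' := Finset.mem_Icc.mp hs
    rw [sId hσ (L+1) p s (by omega) (by omega) (by omega) (by omega) (by omega)
      (by omega) (by omega) (by omega) (by omega)]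
  rw [H3, show (L + 2) - 1 = L + 1 from rfl]
  module

lemma stepFixLow (p q t : ℕ) (ht1 : 1 ≤ t) (ht2 : t + 1 ≤ p) (hpq : p < q) (hq : q ≤ n) :
    σ t (e (p + 1) (q + 1) - ∑ s ∈ Icc (p + 1 + 1) q,
        (((x ^ ((s : ℤ) - ((q : ℤ) + 1)) : Rˣ) : R) * ((x : R) - 1)) • e (p + 1) s)
      = e (p + 1) (q + 1) - ∑ s ∈ Icc (p + 1 + 1) q,
        (((x ^ ((s : ℤ) - ((q : ℤ) + 1)) : Rˣ) : R) * ((x : R) - 1)) • e (p + 1) s := by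
  rw [map_sub, map_sum,
    sId hσ t (p+1) (q+1) (by omega) (by omega) (by omega) (by omega) (by omega)
      (by omega) (by omega) (by omega) (by omega)]
  congr 1
  refine Finset.sum_congr rfl fun s hs => ?_
  have hs' := Finset.mem_Icc.mp hs
  rw [map_smul, sId hσ t (p+1) s (by omega) (by omega) (by omega) (by omega) (by omega)
    (by omega) (by omega) (by omega) (by omega)]

lemma stepFixHigh (p q t : ℕ) (ht1 : q + 1 ≤ t) (ht2 : t ≤ n) (hp : 1 ≤ p) (hpq : p < q) :
    σ t (wFin x e p q) = wFin x e p q := by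
  rw [wFin, map_add, map_smul, map_sum,
    sId hσ t p q (by omega) (by omega) (by omega) (by omega) (by omega)
      (by omega) (by omega) (by omega) (by omega)]
  congr 1
  refine Finset.sum_congr rfl fun s hs => ?_
  have hs' := Finset.mem_Icc.mp hs
  rw [map_smul, sId hσ t p s (by omega) (by omega) (by omega) (by omega) (by omega)
    (by omega) (by omega) (by omega) (by omega)]

end LKB

end LKBSteps2

section LKBFinal

variable {R : Type*} [CommRing R] {V : Type*} [AddCommGroup V] [Module R V]
variable {x : Rˣ} {n : ℕ} {e : ℕ → ℕ → V}

namespace LKB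

lemma finalM (M : Module.End R V)
    (hM : ∀ i j, 1 ≤ i → i < j → j ≤ n + 1 →
      M (e i j) = e i j + ∑ s ∈ Finset.Icc (i + 1) (j - 1),
        (1 - ((x⁻¹ : Rˣ) : R)) • e i s)
    (p q : ℕ) (hp : 1 ≤ p) (hpq : p < q) (hq : q ≤ n) :
    M (wFin x e p q) = (x : R) • e p q := by
  have hxi : (x : R) * ((x⁻¹ : Rˣ) : R) = 1 := Units.mul_inv x
  rw [wFin]
  simp only [map_add, map_smul, map_sum]
  rw [hM p q (by omega) (by omega) (by omega)]
  have HS1 : ∑ s ∈ Icc (p + 1) (q - 1),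
      (((x ^ ((s : ℤ) - (q : ℤ) + 1) : Rˣ) : R) * (1 - (x : R))) • M (e p s)
      = ∑ s ∈ Icc (p + 1) (q - 1),
          ((((x ^ ((s : ℤ) - (q : ℤ) + 1) : Rˣ) : R) * (1 - (x : R))) • e p s
            + ∑ t ∈ Icc (p + 1) (s - 1),
              ((((x ^ ((s : ℤ) - (q : ℤ) + 1) : Rˣ) : R) * (1 - (x : R)))
                * (1 - ((x⁻¹ : Rˣ) : R))) • e p t) := by
    refine Finset.sum_congr rfl fun s hs => ?_
    have hs' := Finset.mem_Icc.mp hs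
    rw [hM p s (by omega) (by omega) (by omega), smul_add, Finset.smul_sum]
    simp only [smul_smul]
  rw [HS1, Finset.sum_add_distrib]
  have Hswap : ∑ s ∈ Icc (p + 1) (q - 1), ∑ t ∈ Icc (p + 1) (s - 1),
        ((((x ^ ((s : ℤ) - (q : ℤ) + 1) : Rˣ) : R) * (1 - (x : R)))
          * (1 - ((x⁻¹ : Rˣ) : R))) • e p t
      = ∑ t ∈ Icc (p + 1) (q - 1),
          ((1 - (x : R)) * (1 - ((x ^ ((t : ℤ) - (q : ℤ) + 1) : Rˣ) : R))) • e p t := by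
    rw [Finset.sum_comm' (s' := fun t => Icc (t + 1) (q - 1)) (t' := Icc (p + 1) (q - 1))
      (by intro a b; simp only [mem_Icc]; omega)]
    refine Finset.sum_congr rfl fun t ht => ?_
    have ht' := Finset.mem_Icc.mp ht
    rw [← Finset.sum_smul]
    congr 1
    have tele : ∑ s ∈ Icc (t + 1) (q - 1),
        (((x ^ ((s : ℤ) - (q : ℤ) + 1) : Rˣ) : R)
          - ((x ^ ((((s - 1 : ℕ)) : ℤ) - (q : ℤ) + 1) : Rˣ) : R))
        = ((x ^ ((((q - 1 : ℕ)) : ℤ) - (q : ℤ) + 1) : Rˣ) : R)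
          - ((x ^ ((t : ℤ) - (q : ℤ) + 1) : Rˣ) : R) := by
      exact sum_tele (fun u => ((x ^ (((u : ℕ) : ℤ) - (q : ℤ) + 1) : Rˣ) : R)) t (q - 1)
        (by omega)
    calc ∑ s ∈ Icc (t + 1) (q - 1),
          ((((x ^ ((s : ℤ) - (q : ℤ) + 1) : Rˣ) : R) * (1 - (x : R)))
            * (1 - ((x⁻¹ : Rˣ) : R)))
        = ∑ s ∈ Icc (t + 1) (q - 1), (1 - (x : R)) *
            (((x ^ ((s : ℤ) - (q : ℤ) + 1) : Rˣ) : R)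
              - ((x ^ ((((s - 1 : ℕ)) : ℤ) - (q : ℤ) + 1) : Rˣ) : R)) := by
          refine Finset.sum_congr rfl fun s hs => ?_
          have hs' := Finset.mem_Icc.mp hs
          have hb : ((x ^ ((s : ℤ) - (q : ℤ) + 1) : Rˣ) : R)
              = ((x ^ ((((s - 1 : ℕ)) : ℤ) - (q : ℤ) + 1) : Rˣ) : R) * (x : R) := by
            rw [show ((s : ℤ) - (q : ℤ) + 1)
                = ((((s - 1 : ℕ)) : ℤ) - (q : ℤ) + 1) + 1 by omega, zshift]
          rw [hb]
          linear_combination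
            (-(((x ^ ((((s - 1 : ℕ)) : ℤ) - (q : ℤ) + 1) : Rˣ) : R) * (1 - (x : R)))) * hxi
      _ = (1 - (x : R)) * ∑ s ∈ Icc (t + 1) (q - 1),
            (((x ^ ((s : ℤ) - (q : ℤ) + 1) : Rˣ) : R)
              - ((x ^ ((((s - 1 : ℕ)) : ℤ) - (q : ℤ) + 1) : Rˣ) : R)) := by
          rw [Finset.mul_sum]
      _ = (1 - (x : R)) * (1 - ((x ^ ((t : ℤ) - (q : ℤ) + 1) : Rˣ) : R)) := by
          rw [tele, show ((((q - 1 : ℕ)) : ℤ) - (q : ℤ) + 1) = 0 by omega, zpow_zero,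
            Units.val_one]
  rw [Hswap, smul_add, Finset.smul_sum]
  simp only [smul_smul]
  trans (∑ t ∈ Icc (p + 1) (q - 1),
      (((x : R) * (1 - ((x⁻¹ : Rˣ) : R))
        + ((x ^ ((t : ℤ) - (q : ℤ) + 1) : Rˣ) : R) * (1 - (x : R))
        + (1 - (x : R)) * (1 - ((x ^ ((t : ℤ) - (q : ℤ) + 1) : Rˣ) : R))) • e p t)
      + (x : R) • e p q)
  · simp only [add_smul, Finset.sum_add_distrib]
    module
  · rw [Finset.sum_eq_zero, zero_add]
    intro t ht
    have hc : (x : R) * (1 - ((x⁻¹ : Rˣ) : R))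
        + ((x ^ ((t : ℤ) - (q : ℤ) + 1) : Rˣ) : R) * (1 - (x : R))
        + (1 - (x : R)) * (1 - ((x ^ ((t : ℤ) - (q : ℤ) + 1) : Rˣ) : R)) = 0 := by
      linear_combination (-1 : R) * hxi
    rw [hc, zero_smul]

end LKB

end LKBFinal

/-- For the LKB generators `σ_k` (Paoluzzi–Paris conventions), `Γ = σ_n ∘ ⋯ ∘ σ_1`, and
the base-change endomorphisms `M`, `N`, one has
`(M ∘ Γ ∘ N) (e i j) = x • e (i-1) (j-1)` for all `2 ≤ i < j ≤ n+1`. -/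
theorem MGammaN_on_e_of_two_le {R : Type*} [CommRing R] (x : Rˣ) (y : R)
    {V : Type*} [AddCommGroup V] [Module R V]
    (n : ℕ) (hn : 1 ≤ n)
    (e : ℕ → ℕ → V) (σ : ℕ → Module.End R V)
    (hσ : ∀ k i j, 1 ≤ k → k ≤ n → 1 ≤ i → i < j → j ≤ n + 1 →
      σ k (e i j) =
        if i = k + 1 then (x : R) • e k j + (1 - (x : R)) • e i j
        else if k = i ∧ i + 1 < j then
          e (i + 1) j - ((x : R) * y * ((x : R) - 1)) • e k (k + 1)
        else if k = i ∧ j = i + 1 then -(((x : R) ^ 2 * y) • e k (k + 1))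
        else if i < k ∧ k + 1 < j then e i j - (y * ((x : R) - 1) ^ 2) • e k (k + 1)
        else if i < k ∧ k + 1 = j then
          e i (j - 1) - ((x : R) * y * ((x : R) - 1)) • e k (k + 1)
        else if k = j then (x : R) • e i (j + 1) + (1 - (x : R)) • e i j
        else e i j)
    (M N : Module.End R V)
    (hM : ∀ i j, 1 ≤ i → i < j → j ≤ n + 1 →
      M (e i j) = e i j + ∑ s ∈ Finset.Icc (i + 1) (j - 1),
        (1 - ((x⁻¹ : Rˣ) : R)) • e i s)
    (hN : ∀ i j, 1 ≤ i → i < j → j ≤ n + 1 →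
      N (e i j) = e i j - ∑ s ∈ Finset.Icc (i + 1) (j - 1),
        (((x ^ ((s : ℤ) - (j : ℤ)) : Rˣ) : R) * ((x : R) - 1)) • e i s)
    (i j : ℕ) (hi : 2 ≤ i) (hij : i < j) (hj : j ≤ n + 1) :
    M (compSeq σ 1 n (N (e i j))) = (x : R) • e (i - 1) (j - 1) := by
  have hσ' : LKB.HS x y n e σ := hσ
  obtain ⟨p, rfl⟩ : ∃ p, i = p + 1 := ⟨i - 1, by omega⟩
  obtain ⟨q, rfl⟩ : ∃ q, j = q + 1 := ⟨j - 1, by omega⟩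
  have hp : 1 ≤ p := by omega
  have hpq : p < q := by omega
  have hq : q ≤ n := by omega
  rw [hN (p + 1) (q + 1) (by omega) (by omega) (by omega)]
  simp only [Nat.add_sub_cancel]
  push_cast
  obtain ⟨a, rfl⟩ : ∃ a, p = a + 1 := ⟨p - 1, by omega⟩
  set Ne : V := e (a + 1 + 1) (q + 1) - ∑ s ∈ Finset.Icc (a + 1 + 1 + 1) q,
    (((x ^ ((s : ℤ) - ((q : ℤ) + 1)) : Rˣ) : R) * ((x : R) - 1)) • e (a + 1 + 1) s with hNe
  have hsplit1 : compSeq σ 1 n = compSeq σ (1 + q) (n - q) * compSeq σ 1 q := by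
    conv_lhs => rw [show n = q + (n - q) by omega]
    exact LKB.compSeq_split σ 1 q (n - q)
  have hsplit2 : compSeq σ 1 q = compSeq σ (1 + a) (q - a) * compSeq σ 1 a := by
    conv_lhs => rw [show q = a + (q - a) by omega]
    exact LKB.compSeq_split σ 1 a (q - a)
  have low : compSeq σ 1 a Ne = Ne := by
    refine LKB.compSeq_fix σ 1 a Ne fun t h1 h2 => ?_
    rw [hNe]
    exact LKB.stepFixLow hσ' (a + 1) q t (by omega) (by omega) (by omega) hq
  have mid : ∀ d, d ≤ q - (a + 1) - 1 →
      compSeq σ (a + 1) (d + 1) Ne = LKB.wMid x e (a + 1) q (a + 1 + d) := by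
    intro d
    induction d with
    | zero =>
        intro _
        show (σ (a + 1 + 0) * compSeq σ (a + 1) 0) Ne = _
        rw [Module.End.mul_apply, show (compSeq σ (a + 1) 0) Ne = Ne from rfl]
        simp only [Nat.add_zero]
        rw [hNe]
        exact LKB.stepA hσ' (a + 1) q (by omega) (by omega) hq
    | succ d ih =>
        intro hd
        show (σ (a + 1 + (d + 1)) * compSeq σ (a + 1) (d + 1)) Ne = _
        rw [Module.End.mul_apply, ih (by omega)]
        exact LKB.stepB hσ' (a + 1) q (a + 1 + d) (by omega) (by omega) (by omega) hq
  have mid' : compSeq σ (a + 1) (q - a - 1) Ne = LKB.wMid x e (a + 1) q (q - 1) := by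
    have h := mid (q - a - 2) (by omega)
    rw [show (a + 1) + (q - a - 2) = q - 1 by omega] at h
    rw [show q - a - 1 = (q - a - 2) + 1 by omega]
    exact h
  have step : compSeq σ (a + 1) (q - a) Ne = LKB.wFin x e (a + 1) q := by
    rw [show q - a = (q - a - 1) + 1 by omega]
    show (σ ((a + 1) + (q - a - 1)) * compSeq σ (a + 1) (q - a - 1)) Ne = _
    rw [Module.End.mul_apply, mid', show (a + 1) + (q - a - 1) = q by omega]
    exact LKB.stepC hσ' (a + 1) q (q - 1) (by omega) (by omega) hq (by omega)
  have high : compSeq σ (1 + q) (n - q) (LKB.wFin x e (a + 1) q) = LKB.wFin x e (a + 1) q := by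
    refine LKB.compSeq_fix σ (1 + q) (n - q) _ fun t h1 h2 => ?_
    exact LKB.stepFixHigh hσ' (a + 1) q t (by omega) (by omega) (by omega) (by omega)
  rw [hsplit1, Module.End.mul_apply, hsplit2, Module.End.mul_apply, low,
    show (1 : ℕ) + a = a + 1 by omega, step, high]
  exact LKB.finalM M hM (a + 1) q (by omega) (by omega) hq
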